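/- Let (T, A)_ω be a DL-Lite_core weighted knowledge base, k an integer, r a role name, and a, b individual names. Let Ā be a fresh concept name, T' = T ∪ {Ā ⊓ ∃r ⊑ ⊥}, A' = A ∪ {r(a,b), Ā(a)}, and let ω' extend ω by assigning weight ∞ to the axiom Ā ⊓ ∃r ⊑ ⊥ and to the assertion r(a,b), and weight 1 to the assertion Ā(a). Then (T, A)_ω ⊨_p^k r(a,b) if and only if (T', A')_{ω'} ⊭_c^{k+1} Ā(a). -/

import Mathlib

namespace DL

/-! ### Syntax -/

abbrev IndName := ℕ
abbrev CName := ℕ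
abbrev RName := ℕ

/-- Roles: role names and inverse roles. -/
inductive Role where
  | name : RName → Role
  | inv  : RName → Role
deriving DecidableEq

/-- `ALCHIO` concepts. -/
inductive Concept where
  | top  : Concept
  | bot  : Concept
  | atom : CName → Concept
  | nom  : IndName → Concept
  | neg  : Concept → Concept
  | conj : Concept → Concept → Concept
  | ex   : Role → Concept → Concept
deriving DecidableEq

/-- TBox axioms: concept inclusions and role inclusions. -/
inductive Axiom where
  | ci : Concept → Concept → Axiom
  | ri : Role → Role → Axiom
deriving DecidableEq

/-- ABox assertions. -/
inductive Assertion where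
  | ca : CName → IndName → Assertion
  | ra : RName → IndName → IndName → Assertion
deriving DecidableEq

/-! ### Interpretations -/

/-- A DL interpretation with domain a subset of a universe `U`.  Individual names are
interpreted via `indI` (under the standard names assumption, the individual names of the
ABox under consideration are interpreted "as themselves", i.e. injectively). -/
structure Interp (U : Type) where
  dom : Set U
  indI : IndName → U
  cI : CName → Set U
  rI : RName → Set (U × U)
  cI_sub : ∀ A, cI A ⊆ dom
  rI_sub : ∀ r p, p ∈ rI r → p.1 ∈ dom ∧ p.2 ∈ dom

variable {U : Type}

/-- Every individual name denotes an element of the domain. -/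
def Interp.Proper (I : Interp U) : Prop := ∀ a, I.indI a ∈ I.dom

def Role.interp (I : Interp U) : Role → Set (U × U)
  | Role.name r => I.rI r
  | Role.inv r  => {p | (p.2, p.1) ∈ I.rI r}

def Concept.interp (I : Interp U) : Concept → Set U
  | Concept.top => I.dom
  | Concept.bot => ∅
  | Concept.atom A => I.cI A
  | Concept.nom a => {I.indI a} ∩ I.dom
  | Concept.neg C => I.dom \ Concept.interp I C
  | Concept.conj C D => Concept.interp I C ∩ Concept.interp I D
  | Concept.ex r C => {d | ∃ e, (d, e) ∈ Role.interp I r ∧ e ∈ Concept.interp I C}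

def Assertion.sat (I : Interp U) : Assertion → Prop
  | Assertion.ca A a => I.indI a ∈ I.cI A
  | Assertion.ra r a b => (I.indI a, I.indI b) ∈ I.rI r

/-! ### Violations and cost -/

/-- Violations of a concept inclusion `C ⊑ D`. -/
def vioCI (I : Interp U) (C D : Concept) : Set U :=
  Concept.interp I C \ Concept.interp I D

/-- Violations of a role inclusion `r ⊑ s`. -/
def vioRI (I : Interp U) (r s : Role) : Set (U × U) :=
  Role.interp I r \ Role.interp I s

/-- The number of violations of an axiom. -/
noncomputable def Axiom.vioCount (I : Interp U) : Axiom → ℕ∞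
  | Axiom.ci C D => (vioCI I C D).encard
  | Axiom.ri r s => (vioRI I r s).encard

open Classical in
/-- The cost of an interpretation w.r.t. a weighted knowledge base `(T, A)` with weight
functions `wT` (on TBox axioms) and `wA` (on ABox assertions). -/
noncomputable def cost (T : Finset Axiom) (A : Finset Assertion)
    (wT : Axiom → ℕ∞) (wA : Assertion → ℕ∞) (I : Interp U) : ℕ∞ :=
  (∑ τ ∈ T, wT τ * Axiom.vioCount I τ) +
    ∑ α ∈ A, (if Assertion.sat I α then 0 else wA α)

/-! ### Queries -/

inductive Term where
  | var : ℕ → Term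
  | ind : IndName → Term
deriving DecidableEq

inductive QAtom where
  | ca : CName → Term → QAtom
  | ra : RName → Term → Term → QAtom
deriving DecidableEq

/-- A Boolean conjunctive query: a finite set of atoms, all of whose variables are
(implicitly) existentially quantified. -/
abbrev BCQ := Finset QAtom

def Term.eval (I : Interp U) (π : ℕ → U) : Term → U
  | Term.var v => π v
  | Term.ind a => I.indI a

def QAtom.sat (I : Interp U) (π : ℕ → U) : QAtom → Prop
  | QAtom.ca A t => Term.eval I π t ∈ I.cI A
  | QAtom.ra r t t' => (Term.eval I π t, Term.eval I π t') ∈ I.rI r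

/-- Satisfaction of a BCQ in an interpretation. -/
def satQ (I : Interp U) (q : BCQ) : Prop :=
  ∃ π : ℕ → U, (∀ v, π v ∈ I.dom) ∧ ∀ a ∈ q, QAtom.sat I π a

/-- An instance query is a BCQ with a single atom. -/
def IsIQ (q : BCQ) : Prop := ∃ a : QAtom, q = {a}

/-! ### Cost-based semantics -/

/-- `k`-satisfiability: some interpretation has cost at most `k`. -/
def ksat (T : Finset Axiom) (A : Finset Assertion)
    (wT : Axiom → ℕ∞) (wA : Assertion → ℕ∞) (k : ℕ) : Prop :=
  ∃ (U : Type) (I : Interp U), I.Proper ∧ cost T A wT wA I ≤ (k : ℕ∞)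

/-- `K ⊨ₚᵏ q`: some interpretation of cost at most `k` satisfies `q`. -/
def satP (T : Finset Axiom) (A : Finset Assertion)
    (wT : Axiom → ℕ∞) (wA : Assertion → ℕ∞) (k : ℕ) (q : BCQ) : Prop :=
  ∃ (U : Type) (I : Interp U), I.Proper ∧ cost T A wT wA I ≤ (k : ℕ∞) ∧ satQ I q

/-- `K ⊨꜀ᵏ q`: every interpretation of cost at most `k` satisfies `q`. -/
def satC (T : Finset Axiom) (A : Finset Assertion)
    (wT : Axiom → ℕ∞) (wA : Assertion → ℕ∞) (k : ℕ) (q : BCQ) : Prop :=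
  ∀ (U : Type) (I : Interp U), I.Proper → cost T A wT wA I ≤ (k : ℕ∞) → satQ I q

/-- The optimal cost of a weighted knowledge base. -/
noncomputable def optCost (T : Finset Axiom) (A : Finset Assertion)
    (wT : Axiom → ℕ∞) (wA : Assertion → ℕ∞) : ℕ∞ :=
  sInf {c : ℕ∞ | ∃ (U : Type) (I : Interp U), I.Proper ∧ cost T A wT wA I = c}

/-- `K ⊨ₚᵒᵖᵗ q`: some interpretation of optimal cost satisfies `q`. -/
noncomputable def satPopt (T : Finset Axiom) (A : Finset Assertion)
    (wT : Axiom → ℕ∞) (wA : Assertion → ℕ∞) (q : BCQ) : Prop :=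
  ∃ (U : Type) (I : Interp U), I.Proper ∧ cost T A wT wA I = optCost T A wT wA ∧ satQ I q

/-- `K ⊨꜀ᵒᵖᵗ q`: every interpretation of optimal cost satisfies `q`. -/
noncomputable def satCopt (T : Finset Axiom) (A : Finset Assertion)
    (wT : Axiom → ℕ∞) (wA : Assertion → ℕ∞) (q : BCQ) : Prop :=
  ∀ (U : Type) (I : Interp U), I.Proper → cost T A wT wA I = optCost T A wT wA → satQ I q

/-! ### Occurrences of symbols -/

def Role.base : Role → RName
  | Role.name r => r
  | Role.inv r => r

def Concept.cnames : Concept → Finset CName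
  | Concept.atom A => {A}
  | Concept.neg C => C.cnames
  | Concept.conj C D => C.cnames ∪ D.cnames
  | Concept.ex _ C => C.cnames
  | _ => ∅

def Concept.rnames : Concept → Finset RName
  | Concept.neg C => C.rnames
  | Concept.conj C D => C.rnames ∪ D.rnames
  | Concept.ex r C => insert r.base C.rnames
  | _ => ∅

def Concept.indNames : Concept → Finset IndName
  | Concept.nom a => {a}
  | Concept.neg C => C.indNames
  | Concept.conj C D => C.indNames ∪ D.indNames
  | Concept.ex _ C => C.indNames
  | _ => ∅

def Axiom.cnames : Axiom → Finset CName
  | Axiom.ci C D => C.cnames ∪ D.cnames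
  | Axiom.ri _ _ => ∅

def Axiom.rnames : Axiom → Finset RName
  | Axiom.ci C D => C.rnames ∪ D.rnames
  | Axiom.ri r s => {r.base, s.base}

def Axiom.indNames : Axiom → Finset IndName
  | Axiom.ci C D => C.indNames ∪ D.indNames
  | Axiom.ri _ _ => ∅

def Assertion.cnames : Assertion → Finset CName
  | Assertion.ca A _ => {A}
  | Assertion.ra _ _ _ => ∅

def Assertion.rnames : Assertion → Finset RName
  | Assertion.ca _ _ => ∅
  | Assertion.ra r _ _ => {r}

def Assertion.indNames : Assertion → Finset IndName
  | Assertion.ca _ a => {a}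
  | Assertion.ra _ a b => {a, b}

/-- The individual names occurring in an ABox. -/
def aboxInds (A : Finset Assertion) : Finset IndName := A.biUnion Assertion.indNames

/-- The individual names occurring in a KB. -/
def kbInds (T : Finset Axiom) (A : Finset Assertion) : Finset IndName :=
  T.biUnion Axiom.indNames ∪ aboxInds A

def Term.indNames : Term → Finset IndName
  | Term.var _ => ∅
  | Term.ind a => {a}

def QAtom.indNames : QAtom → Finset IndName
  | QAtom.ca _ t => t.indNames
  | QAtom.ra _ t t' => t.indNames ∪ t'.indNames

def QAtom.cnames : QAtom → Finset CName
  | QAtom.ca A _ => {A}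
  | QAtom.ra _ _ _ => ∅

def qInds (q : BCQ) : Finset IndName := q.biUnion QAtom.indNames

def qCnames (q : BCQ) : Finset CName := q.biUnion QAtom.cnames

/-! ### Sizes -/

def Concept.size : Concept → ℕ
  | Concept.top => 1
  | Concept.bot => 1
  | Concept.atom _ => 1
  | Concept.nom _ => 1
  | Concept.neg C => C.size + 1
  | Concept.conj C D => C.size + D.size + 1
  | Concept.ex _ C => C.size + 2

def Axiom.size : Axiom → ℕ
  | Axiom.ci C D => C.size + D.size + 1
  | Axiom.ri _ _ => 3

def Assertion.size : Assertion → ℕ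
  | Assertion.ca _ _ => 2
  | Assertion.ra _ _ _ => 3

def tboxSize (T : Finset Axiom) : ℕ := ∑ τ ∈ T, τ.size

def aboxSize (A : Finset Assertion) : ℕ := ∑ α ∈ A, α.size

/-! ### DL-Lite fragments -/

/-- Basic concepts: concept names and unqualified existential restrictions `∃r` (with a
possibly inverse role `r`), the latter rendered as `∃r.⊤`. -/
inductive IsBasic : Concept → Prop
  | atom (A : CName) : IsBasic (Concept.atom A)
  | ex (r : Role) : IsBasic (Concept.ex r Concept.top)

/-- A `DL-Lite_core` axiom: `B ⊑ C` or `B ⊓ C ⊑ ⊥` with `B, C` basic concepts. -/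
def IsCoreAxiom (τ : Axiom) : Prop :=
  (∃ B C, τ = Axiom.ci B C ∧ IsBasic B ∧ IsBasic C) ∨
  (∃ B C, τ = Axiom.ci (Concept.conj B C) Concept.bot ∧ IsBasic B ∧ IsBasic C)

def IsDLLiteCore (T : Finset Axiom) : Prop := ∀ τ ∈ T, IsCoreAxiom τ

/-- Concepts built from basic concepts using `¬`, `⊓` (and hence also `⊔`). -/
inductive IsBoolConcept : Concept → Prop
  | basic {C} : IsBasic C → IsBoolConcept C
  | neg {C} : IsBoolConcept C → IsBoolConcept (Concept.neg C)
  | conj {C D} : IsBoolConcept C → IsBoolConcept D → IsBoolConcept (Concept.conj C D)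

/-- A `DL-Lite_bool^H` axiom: a concept inclusion between Boolean combinations of basic
concepts, or a role inclusion. -/
def IsBoolHAxiom (τ : Axiom) : Prop :=
  (∃ C D, τ = Axiom.ci C D ∧ IsBoolConcept C ∧ IsBoolConcept D) ∨ (∃ r s, τ = Axiom.ri r s)

def IsDLLiteBoolH (T : Finset Axiom) : Prop := ∀ τ ∈ T, IsBoolHAxiom τ

/-!
Given a model `I` of `(T, A)` of cost at most `k` in which `r(a,b)` holds, interpreting the
fresh name `Ā` (`X` below) as `∅` leaves the cost of `(T, A)` unchanged, violates `Ā(a)`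
(cost `1`) and nothing else of `(T', A')`, so it refutes `Ā(a)` at cost at most `k + 1`.
Conversely, an interpretation of cost at most `k + 1` refuting `Ā(a)` cannot violate the
infinitely weighted `r(a,b)`, and after paying `1` for `Ā(a)` it is a model of `(T, A)` of
cost at most `k`.
-/

def Interp.eraseConcept (I : Interp U) (X : CName) : Interp U where
  dom := I.dom
  indI := I.indI
  cI := fun A => if A = X then ∅ else I.cI A
  rI := I.rI
  cI_sub := fun A => by
    split
    · exact Set.empty_subset _
    · exact I.cI_sub A
  rI_sub := I.rI_sub

section EraseConcept

variable (I : Interp U) (X : CName)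

lemma Role.interp_eraseConcept (ρ : Role) :
    Role.interp (I.eraseConcept X) ρ = Role.interp I ρ := by
  cases ρ <;> rfl

lemma Concept.interp_eraseConcept {C : Concept} (h : X ∉ C.cnames) :
    Concept.interp (I.eraseConcept X) C = Concept.interp I C := by
  induction C with
  | atom A =>
    have hA : A ≠ X := by rintro rfl; simp [Concept.cnames] at h
    simp [Concept.interp, Interp.eraseConcept, hA]
  | neg C ih => simp only [Concept.interp, ih h]; rfl
  | conj C D ihC ihD =>
    simp only [Concept.cnames, Finset.mem_union, not_or] at h
    simp only [Concept.interp, ihC h.1, ihD h.2]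
  | ex ρ C ih => simp only [Concept.interp, ih h, Role.interp_eraseConcept]
  | _ => rfl

lemma Axiom.vioCount_eraseConcept {τ : Axiom} (h : X ∉ τ.cnames) :
    Axiom.vioCount (I.eraseConcept X) τ = Axiom.vioCount I τ := by
  cases τ with
  | ci C D =>
    simp only [Axiom.cnames, Finset.mem_union, not_or] at h
    simp only [Axiom.vioCount, vioCI, Concept.interp_eraseConcept I X h.1,
      Concept.interp_eraseConcept I X h.2]
  | ri ρ σ => simp only [Axiom.vioCount, vioRI, Role.interp_eraseConcept]

lemma Assertion.sat_eraseConcept {α : Assertion} (h : X ∉ α.cnames) :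
    Assertion.sat (I.eraseConcept X) α ↔ Assertion.sat I α := by
  cases α with
  | ca A c =>
    have hA : A ≠ X := by rintro rfl; simp [Assertion.cnames] at h
    simp [Assertion.sat, Interp.eraseConcept, hA]
  | ra ρ c d => rfl

lemma cost_eraseConcept {T : Finset Axiom} {A : Finset Assertion}
    (hT : ∀ τ ∈ T, X ∉ τ.cnames) (hA : ∀ α ∈ A, X ∉ α.cnames)
    (wT : Axiom → ℕ∞) (wA : Assertion → ℕ∞) :
    cost T A wT wA (I.eraseConcept X) = cost T A wT wA I := by
  unfold cost
  congr 1
  · exact Finset.sum_congr rfl fun τ hτ => by rw [Axiom.vioCount_eraseConcept I X (hT τ hτ)]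
  · refine Finset.sum_congr rfl fun α hα => ?_
    classical
    exact if_congr (Assertion.sat_eraseConcept I X (hA α hα)) rfl rfl

end EraseConcept

section Cost

variable {T : Finset Axiom} {A : Finset Assertion} {wT : Axiom → ℕ∞} {wA : Assertion → ℕ∞}
  {I : Interp U}

lemma cost_congr {wT' : Axiom → ℕ∞} {wA' : Assertion → ℕ∞}
    (hT : ∀ τ ∈ T, wT τ = wT' τ) (hA : ∀ α ∈ A, ¬ Assertion.sat I α → wA α = wA' α) :
    cost T A wT wA I = cost T A wT' wA' I := by
  unfold cost
  congr 1
  · exact Finset.sum_congr rfl fun τ hτ => by rw [hT τ hτ]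
  · refine Finset.sum_congr rfl fun α hα => ?_
    split_ifs with hsat
    · rfl
    · exact hA α hα hsat

lemma cost_insert_axiom {τ : Axiom} (hτ : τ ∉ T) :
    cost (insert τ T) A wT wA I = wT τ * Axiom.vioCount I τ + cost T A wT wA I := by
  unfold cost
  rw [Finset.sum_insert hτ, add_assoc]

lemma cost_insert_of_sat {α : Assertion} (h : Assertion.sat I α) :
    cost T (insert α A) wT wA I = cost T A wT wA I := by
  by_cases hα : α ∈ A
  · rw [Finset.insert_eq_of_mem hα]
  · unfold cost
    rw [Finset.sum_insert hα, if_pos h, zero_add]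

lemma cost_insert_of_not_sat {α : Assertion} (hα : α ∉ A) (h : ¬ Assertion.sat I α) :
    cost T (insert α A) wT wA I = cost T A wT wA I + wA α := by
  unfold cost
  rw [Finset.sum_insert hα, if_neg h, add_comm (wA α), add_assoc]

lemma cost_eq_top_of_not_sat {α : Assertion} (hα : α ∈ A) (h : ¬ Assertion.sat I α)
    (hw : wA α = ⊤) : cost T A wT wA I = ⊤ := by
  unfold cost
  rw [← Finset.add_sum_erase A _ hα, if_neg h, hw, top_add, add_top]

end Cost

lemma satQ_ca_ind_iff {I : Interp U} (hI : I.Proper) (X : CName) (a : IndName) :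
    satQ I {QAtom.ca X (Term.ind a)} ↔ Assertion.sat I (Assertion.ca X a) := by
  constructor
  · rintro ⟨π, -, hπ⟩
    simpa [QAtom.sat, Term.eval, Assertion.sat] using hπ _ (Finset.mem_singleton_self _)
  · intro h
    exact ⟨fun _ => I.indI a, fun _ => hI a,
      by simpa [QAtom.sat, Term.eval, Assertion.sat] using h⟩

lemma satQ_ra_ind_iff {I : Interp U} (hI : I.Proper) (r : RName) (a b : IndName) :
    satQ I {QAtom.ra r (Term.ind a) (Term.ind b)} ↔ Assertion.sat I (Assertion.ra r a b) := by
  constructor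
  · rintro ⟨π, -, hπ⟩
    simpa [QAtom.sat, Term.eval, Assertion.sat] using hπ _ (Finset.mem_singleton_self _)
  · intro h
    exact ⟨fun _ => I.indI a, fun _ => hI a,
      by simpa [QAtom.sat, Term.eval, Assertion.sat] using h⟩

section Reduction

variable (T : Finset Axiom) (A : Finset Assertion) (wT : Axiom → ℕ∞) (wA : Assertion → ℕ∞)
  (r : RName) (a b : IndName) (X : CName)

def disjExistsAxiom : Axiom :=
  Axiom.ci (Concept.conj (Concept.atom X) (Concept.ex (Role.name r) Concept.top)) Concept.bot

def reductionTBox : Finset Axiom := insert (disjExistsAxiom r X) T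

def reductionABox : Finset Assertion :=
  insert (Assertion.ra r a b) (insert (Assertion.ca X a) A)

def reductionWT : Axiom → ℕ∞ := fun τ => if τ = disjExistsAxiom r X then ⊤ else wT τ

def reductionWA : Assertion → ℕ∞ := fun α =>
  if α = Assertion.ca X a then 1 else if α = Assertion.ra r a b then ⊤ else wA α

variable {T A X}

lemma cost_reduction (hT : ∀ τ ∈ T, X ∉ τ.cnames) (hA : ∀ α ∈ A, X ∉ α.cnames)
    (I : Interp U) (hab : Assertion.sat I (Assertion.ra r a b))
    (hXa : ¬ Assertion.sat I (Assertion.ca X a)) :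
    cost (reductionTBox T r X) (reductionABox A r a b X) (reductionWT wT r X)
        (reductionWA wA r a b X) I =
      ⊤ * Axiom.vioCount I (disjExistsAxiom r X) + (cost T A wT wA I + 1) := by
  have hτT : disjExistsAxiom r X ∉ T := fun h =>
    hT _ h (by simp [disjExistsAxiom, Axiom.cnames, Concept.cnames])
  have hXaA : Assertion.ca X a ∉ A := fun h => hA _ h (by simp [Assertion.cnames])
  have hweights :
      cost T A (reductionWT wT r X) (reductionWA wA r a b X) I = cost T A wT wA I := by
    refine cost_congr (fun τ hτ => ?_) (fun α hα hα' => ?_)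
    · exact if_neg (ne_of_mem_of_not_mem hτ hτT)
    · rw [reductionWA, if_neg (ne_of_mem_of_not_mem hα hXaA),
        if_neg (fun h : α = _ => hα' (h ▸ hab))]
  rw [reductionTBox, reductionABox, cost_insert_axiom hτT, cost_insert_of_sat hab,
    cost_insert_of_not_sat hXaA hXa, hweights]
  simp [reductionWT, reductionWA]

lemma cost_reduction_eq_top (I : Interp U) (hab : ¬ Assertion.sat I (Assertion.ra r a b)) :
    cost (reductionTBox T r X) (reductionABox A r a b X) (reductionWT wT r X)
      (reductionWA wA r a b X) I = ⊤ :=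
  cost_eq_top_of_not_sat (Finset.mem_insert_self _ _) hab (by simp [reductionWA])

lemma not_satC_reduction_of_satP (hT : ∀ τ ∈ T, X ∉ τ.cnames) (hA : ∀ α ∈ A, X ∉ α.cnames)
    (k : ℕ) (h : satP T A wT wA k {QAtom.ra r (Term.ind a) (Term.ind b)}) :
    ¬ satC (reductionTBox T r X) (reductionABox A r a b X) (reductionWT wT r X)
      (reductionWA wA r a b X) (k + 1) {QAtom.ca X (Term.ind a)} := by
  obtain ⟨U, I, hI, hcost, hq⟩ := h
  intro hC
  have hab : Assertion.sat (I.eraseConcept X) (Assertion.ra r a b) :=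
    (satQ_ra_ind_iff hI r a b).mp hq
  have hXa : ¬ Assertion.sat (I.eraseConcept X) (Assertion.ca X a) := by
    simp [Assertion.sat, Interp.eraseConcept]
  refine hXa ((satQ_ca_ind_iff (I := I.eraseConcept X) hI X a).mp
    (hC U (I.eraseConcept X) hI ?_))
  have hvio : Axiom.vioCount (I.eraseConcept X) (disjExistsAxiom r X) = 0 := by
    simp [disjExistsAxiom, Axiom.vioCount, vioCI, Concept.interp, Interp.eraseConcept]
  rw [cost_reduction wT wA r a b hT hA _ hab hXa, hvio, mul_zero, zero_add,
    cost_eraseConcept I X hT hA, Nat.cast_succ]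
  exact add_le_add_left hcost 1

lemma satP_of_not_satC_reduction (hT : ∀ τ ∈ T, X ∉ τ.cnames) (hA : ∀ α ∈ A, X ∉ α.cnames)
    (k : ℕ) (h : ¬ satC (reductionTBox T r X) (reductionABox A r a b X) (reductionWT wT r X)
      (reductionWA wA r a b X) (k + 1) {QAtom.ca X (Term.ind a)}) :
    satP T A wT wA k {QAtom.ra r (Term.ind a) (Term.ind b)} := by
  simp only [satC, not_forall] at h
  obtain ⟨U, I, hI, hcost, hq⟩ := h
  have hXa : ¬ Assertion.sat I (Assertion.ca X a) := fun h =>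
    hq ((satQ_ca_ind_iff hI X a).mpr h)
  have hab : Assertion.sat I (Assertion.ra r a b) := by
    by_contra hab
    rw [cost_reduction_eq_top wT wA r a b I hab, top_le_iff] at hcost
    exact ENat.natCast_ne_top _ hcost
  refine ⟨U, I, hI, ?_, (satQ_ra_ind_iff hI r a b).mpr hab⟩
  rw [cost_reduction wT wA r a b hT hA I hab hXa, Nat.cast_succ] at hcost
  exact (ENat.add_le_add_iff_right ENat.one_ne_top).mp (le_add_self.trans hcost)

end Reduction

theorem statement9_general (T : Finset Axiom)
    (A : Finset Assertion) (wT : Axiom → ℕ∞) (wA : Assertion → ℕ∞)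
    (k : ℕ) (r : RName) (a b : IndName)
    (Xb : CName)
    (hXbT : ∀ τ ∈ T, Xb ∉ Axiom.cnames τ) (hXbA : ∀ α ∈ A, Xb ∉ Assertion.cnames α) :
    satP T A wT wA k {QAtom.ra r (Term.ind a) (Term.ind b)} ↔
      ¬ satC
          (insert (Axiom.ci
            (Concept.conj (Concept.atom Xb) (Concept.ex (Role.name r) Concept.top))
            Concept.bot) T)
          (insert (Assertion.ra r a b) (insert (Assertion.ca Xb a) A))
          (fun τ =>
            if τ = Axiom.ci
                (Concept.conj (Concept.atom Xb) (Concept.ex (Role.name r) Concept.top))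
                Concept.bot then ⊤
            else wT τ)
          (fun α =>
            if α = Assertion.ca Xb a then 1
            else if α = Assertion.ra r a b then ⊤
            else wA α)
          (k + 1) {QAtom.ca Xb (Term.ind a)} :=
  ⟨not_satC_reduction_of_satP wT wA r a b hXbT hXbA k,
    satP_of_not_satC_reduction wT wA r a b hXbT hXbA k⟩

/-- (Reduction of `IQAₚᵏ` to the complement of `IQA꜀ᵏ⁺¹`, role
assertion query.)  With a fresh concept name `Xb` (`= Ā`),
`T' = T ∪ {Xb ⊓ ∃r ⊑ ⊥}`, `A' = A ∪ {r(a,b), Xb(a)}`, weight `∞` on the new axiom and on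
`r(a,b)`, and weight `1` on `Xb(a)`:
`(T,A)_ω ⊨ₚᵏ r(a,b)` iff `(T',A')_{ω'} ⊭꜀ᵏ⁺¹ Xb(a)`. -/
theorem statement9 (T : Finset Axiom) (hcore : IsDLLiteCore T)
    (A : Finset Assertion) (wT : Axiom → ℕ∞) (wA : Assertion → ℕ∞)
    (hwT : ∀ τ ∈ T, 1 ≤ wT τ) (hwA : ∀ α ∈ A, 1 ≤ wA α)
    (k : ℕ) (r : RName) (a b : IndName)
    (Xb : CName)
    (hXbT : ∀ τ ∈ T, Xb ∉ Axiom.cnames τ) (hXbA : ∀ α ∈ A, Xb ∉ Assertion.cnames α) :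
    satP T A wT wA k {QAtom.ra r (Term.ind a) (Term.ind b)} ↔
      ¬ satC
          (insert (Axiom.ci
            (Concept.conj (Concept.atom Xb) (Concept.ex (Role.name r) Concept.top))
            Concept.bot) T)
          (insert (Assertion.ra r a b) (insert (Assertion.ca Xb a) A))
          (fun τ =>
            if τ = Axiom.ci
                (Concept.conj (Concept.atom Xb) (Concept.ex (Role.name r) Concept.top))
                Concept.bot then ⊤
            else wT τ)
          (fun α =>
            if α = Assertion.ca Xb a then 1
            else if α = Assertion.ra r a b then ⊤
            else wA α)
          (k + 1) {QAtom.ca Xb (Term.ind a)} :=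
  statement9_general T A wT wA k r a b Xb hXbT hXbA

end DL
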